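/- arXiv:1510.00181 — 5 statements merged into one kernel-verified Lean document; each statement's English description precedes it below -/
import Mathlib

section
/- Let v, u : ℝⁿ → ℝⁿ be C¹ vector fields and suppose there exist scalar functions μ₁, μ₂ : ℝⁿ → ℝ such that the Lie bracket satisfies [v,u](x) = μ₁(x)·v(x) + μ₂(x)·u(x) for all x. Then the skew-symmetric matrix field J(x) with entries J_ij(x) = v_i(x)u_j(x) − v_j(x)u_i(x) satisfies the Jacobi identity: for all indices i, j, k and all x, Σ_l ( J_lk(x)·∂J_ij/∂x_l(x) + J_li(x)·∂J_jk/∂x_l(x) + J_lj(x)·∂J_ki/∂x_l(x) ) = 0. -/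
/-!
For `J = v ∧ u` each contraction `Σ_l J_lk ∂_l F` equals `u_k ∂_v F − v_k ∂_u F`, so the Jacobi
sum only involves the derivatives of `J` along `v` and `u`. Expanding them by the product rule, the
terms containing `∂_v v` or `∂_u u` cancel in the cyclic sum, and what remains is
`−(v ∧ u ∧ [v,u])_ijk`, which vanishes as soon as `[v,u]` lies in the span of `v` and `u`.
-/

/-- The wedge of two vector fields: `(v ∧ u)_ij = v_i u_j − v_j u_i`. -/
noncomputable def wedge {n : ℕ} (v u : (Fin n → ℝ) → (Fin n → ℝ)) (x : Fin n → ℝ) :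
    Matrix (Fin n) (Fin n) ℝ :=
  Matrix.of fun i j => v x i * u x j - v x j * u x i

/-- The partial derivative `∂F/∂x_l` of a scalar function on ℝⁿ. -/
noncomputable def partialDeriv {n : ℕ} (F : (Fin n → ℝ) → ℝ) (l : Fin n) (x : Fin n → ℝ) : ℝ :=
  fderiv ℝ F x (Pi.single l 1)

/-- A matrix field `J` on ℝⁿ satisfies the Jacobi identity if for all `i, j, k` and all `x`:
`Σ_l ( J_lk ∂J_ij/∂x_l + J_li ∂J_jk/∂x_l + J_lj ∂J_ki/∂x_l ) = 0`. -/
def JacobiIdentity {n : ℕ} (J : (Fin n → ℝ) → Matrix (Fin n) (Fin n) ℝ) : Prop :=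
  ∀ (i j k : Fin n) (x : Fin n → ℝ),
    ∑ l, (J x l k * partialDeriv (fun y => J y i j) l x
        + J x l i * partialDeriv (fun y => J y j k) l x
        + J x l j * partialDeriv (fun y => J y k i) l x) = 0

noncomputable def jacobiator {n : ℕ} (J : (Fin n → ℝ) → Matrix (Fin n) (Fin n) ℝ)
    (i j k : Fin n) (x : Fin n → ℝ) : ℝ :=
  ∑ l, (J x l k * partialDeriv (fun y => J y i j) l x
      + J x l i * partialDeriv (fun y => J y j k) l x
      + J x l j * partialDeriv (fun y => J y k i) l x)

/-- The `(i, j, k)` component of the trivector `a ∧ b ∧ c`. -/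
def tripleWedge {n : ℕ} (a b c : Fin n → ℝ) (i j k : Fin n) : ℝ :=
  Matrix.det !![a i, a j, a k; b i, b j, b k; c i, c j, c k]

theorem tripleWedge_smul_add_smul {n : ℕ} (a b : Fin n → ℝ) (s t : ℝ) (i j k : Fin n) :
    tripleWedge a b (s • a + t • b) i j k = 0 := by
  simp only [tripleWedge, Matrix.det_fin_three, Matrix.of_apply, Matrix.cons_val',
    Matrix.cons_val_zero, Matrix.cons_val_one, Matrix.cons_val, Matrix.cons_val_fin_one,
    Pi.add_apply, Pi.smul_apply, smul_eq_mul]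
  ring

theorem sum_mul_partialDeriv {n : ℕ} (F : (Fin n → ℝ) → ℝ) (x w : Fin n → ℝ) :
    ∑ l, w l * partialDeriv F l x = fderiv ℝ F x w := by
  conv_rhs => rw [pi_eq_sum_univ' w]
  simp only [map_sum, map_smul, smul_eq_mul, partialDeriv]

theorem sum_wedge_mul_partialDeriv {n : ℕ} (v u : (Fin n → ℝ) → (Fin n → ℝ))
    (F : (Fin n → ℝ) → ℝ) (k : Fin n) (x : Fin n → ℝ) :
    ∑ l, wedge v u x l k * partialDeriv F l x
      = u x k * fderiv ℝ F x (v x) - v x k * fderiv ℝ F x (u x) := by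
  simp only [← sum_mul_partialDeriv, Finset.mul_sum, ← Finset.sum_sub_distrib, wedge,
    Matrix.of_apply]
  exact Finset.sum_congr rfl fun l _ => by ring

theorem fderiv_wedge_apply {n : ℕ} {v u : (Fin n → ℝ) → (Fin n → ℝ)} {x : Fin n → ℝ}
    (hv : DifferentiableAt ℝ v x) (hu : DifferentiableAt ℝ u x) (p q : Fin n)
    (w : Fin n → ℝ) :
    fderiv ℝ (fun y => wedge v u y p q) x w
      = fderiv ℝ v x w p * u x q + v x p * fderiv ℝ u x w q
        - (fderiv ℝ v x w q * u x p + v x q * fderiv ℝ u x w p) := by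
  have hv' (m : Fin n) := hasFDerivAt_pi'.1 hv.hasFDerivAt m
  have hu' (m : Fin n) := hasFDerivAt_pi'.1 hu.hasFDerivAt m
  rw [HasFDerivAt.fderiv (f := fun y => wedge v u y p q)
    (((hv' p).mul (hu' q)).sub ((hv' q).mul (hu' p)))]
  simp only [sub_apply, add_apply, smul_apply, ContinuousLinearMap.comp_apply,
    ContinuousLinearMap.proj_apply, smul_eq_mul]
  ring

theorem jacobiator_wedge {n : ℕ} {v u : (Fin n → ℝ) → (Fin n → ℝ)} {x : Fin n → ℝ}
    (hv : DifferentiableAt ℝ v x) (hu : DifferentiableAt ℝ u x) (i j k : Fin n) :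
    jacobiator (wedge v u) i j k x
      = -tripleWedge (v x) (u x) (VectorField.lieBracket ℝ v u x) i j k := by
  simp only [jacobiator, Finset.sum_add_distrib, sum_wedge_mul_partialDeriv,
    fderiv_wedge_apply hv hu, tripleWedge, VectorField.lieBracket, Matrix.det_fin_three,
    Matrix.of_apply, Matrix.cons_val', Matrix.cons_val_zero, Matrix.cons_val_one,
    Matrix.cons_val, Matrix.cons_val_fin_one, Pi.sub_apply]
  ring

/-- If `v`, `u` are `C¹` vector fields on ℝⁿ whose Lie bracket satisfies
`[v,u](x) = μ₁(x)·v(x) + μ₂(x)·u(x)` for some scalar functions `μ₁, μ₂`, then the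
skew-symmetric matrix field `J = v ∧ u` satisfies the Jacobi identity. -/
theorem jacobi_of_integrable_distribution {n : ℕ}
    (v u : (Fin n → ℝ) → (Fin n → ℝ))
    (hv : ContDiff ℝ 1 v) (hu : ContDiff ℝ 1 u)
    (μ₁ μ₂ : (Fin n → ℝ) → ℝ)
    (hbr : ∀ x, VectorField.lieBracket ℝ v u x = μ₁ x • v x + μ₂ x • u x) :
    JacobiIdentity (wedge v u) := by
  intro i j k x
  change jacobiator (wedge v u) i j k x = 0
  rw [jacobiator_wedge (hv.differentiable one_ne_zero x)
    (hu.differentiable one_ne_zero x), hbr, tripleWedge_smul_add_smul, neg_zero]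
end

section
/- Let v, u : ℝⁿ → ℝⁿ be C¹ vector fields and H : ℝⁿ → ℝ a C² function such that ⟨v, ∇H⟩ = 0 everywhere and [v,u](x) = μ(x)·v(x) for some scalar function μ. Then the reducing multiplier H_u(x) = ⟨u(x), ∇H(x)⟩ is itself a first integral of v: ⟨v(x), ∇H_u(x)⟩ = 0 for all x. -/
open VectorField

/-- Since `H` is constant along `v`, the commutator formula
`[v, u](H) = v(u(H)) - u(v(H))` loses its second term. -/
lemma fderiv_apply_lieBracket_of_fderiv_apply_eq_zero {𝕜 E F : Type*} [NontriviallyNormedField 𝕜]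
    [NormedAddCommGroup E] [NormedSpace 𝕜 E] [NormedAddCommGroup F] [NormedSpace 𝕜 F]
    {H : E → F} {v u : E → E} {x : E} {n : WithTop ℕ∞}
    (hH : ContDiffAt 𝕜 n H x) (hn : minSmoothness 𝕜 2 ≤ n)
    (hv : DifferentiableAt 𝕜 v x) (hu : DifferentiableAt 𝕜 u x)
    (hfirst : ∀ y, fderiv 𝕜 H y (v y) = 0) :
    fderiv 𝕜 H x (lieBracket 𝕜 v u x) = fderiv 𝕜 (fun y => fderiv 𝕜 H y (u y)) x (v x) := by
  have hvH : (fun y => fderiv 𝕜 H y (v y)) = 0 := funext hfirst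
  rw [fderiv_apply_lieBracket hH hn hu hv, hvH, fderiv_zero, Pi.zero_apply,
    zero_apply, sub_zero]

/-- Under the hypotheses of Hojman's theorem (with `H` of class `C²`),
the reducing multiplier `H_u(x) = ⟨u(x), ∇H(x)⟩` is itself a first integral of `v`:
`⟨v(x), ∇H_u(x)⟩ = 0` for all `x`. -/
theorem reducing_multiplier_is_first_integral {n : ℕ}
    (v u : (Fin n → ℝ) → (Fin n → ℝ)) (H : (Fin n → ℝ) → ℝ)
    (hv : ContDiff ℝ 1 v) (hu : ContDiff ℝ 1 u) (hH : ContDiff ℝ 2 H)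
    (hfirst : ∀ x, fderiv ℝ H x (v x) = 0)
    (μ : (Fin n → ℝ) → ℝ)
    (hbr : ∀ x, VectorField.lieBracket ℝ v u x = μ x • v x) :
    ∀ x, fderiv ℝ (fun y => fderiv ℝ H y (u y)) x (v x) = 0 := by
  intro x
  rw [← fderiv_apply_lieBracket_of_fderiv_apply_eq_zero hH.contDiffAt (by simp)
    (hv.differentiable one_ne_zero x) (hu.differentiable one_ne_zero x) hfirst,
    hbr x, map_smul, hfirst x, smul_zero]
end

section
/- (Hamiltonization in an extended phase space.) Let v : ℝⁿ → ℝⁿ be a C¹ vector field and E : ℝⁿ → ℝ a C¹ function with ⟨v, ∇E⟩ = 0 everywhere. On ℝⁿ × ℝ with added coordinate y, define the vector field ṽ(x,y) = (v(x), 0), the vector field e = (0,…,0,1) (the coordinate field ∂/∂y), and the matrix field J = ṽ∧e. Then: (i) J satisfies the Jacobi identity; (ii) the Hamiltonian vector field of the coordinate function y with respect to J is ṽ, i.e. J(x,y)·∇y = ṽ(x,y) for all (x,y); (iii) E (regarded as a function on ℝⁿ × ℝ independent of y) is a Casimir function of J, i.e. J(x,y)·∇E = 0 for all (x,y). -/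
/-- The gradient of a scalar function on ℝⁿ, as the vector of partial derivatives. -/
noncomputable def grad {n : ℕ} (F : (Fin n → ℝ) → ℝ) (x : Fin n → ℝ) : Fin n → ℝ :=
  fun j => fderiv ℝ F x (Pi.single j 1)

/-- The extension `ṽ(x,y) = (v(x), 0)` of a vector field on ℝⁿ to ℝⁿ × ℝ = ℝⁿ⁺¹,
where `y` is the added last coordinate. -/
noncomputable def extendField {n : ℕ} (v : (Fin n → ℝ) → (Fin n → ℝ)) :
    (Fin (n + 1) → ℝ) → (Fin (n + 1) → ℝ) :=
  fun p => Fin.snoc (v fun i => p i.castSucc) 0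

/-! With `e` constant, `(w ∧ e) g = ⟨e, g⟩ w - ⟨w, g⟩ e`. For `w = ṽ` this gives (ii) because
`ṽ` has no `y`-component, and (iii) because `⟨e, ∇E⟩ = ∂E/∂y = 0` and `⟨ṽ, ∇E⟩ = ⟨v, ∇E⟩ = 0`.
For (i), in the cyclic Jacobi sum of `w ∧ e` the terms carrying a factor `w_l` cancel pointwise,
and what is left only involves the derivative of `w` along `e`, which vanishes for `ṽ` since `ṽ`
does not depend on `y`. -/

open Matrix

section wedge

variable {n : ℕ}

theorem wedge_mulVec (v u : (Fin n → ℝ) → (Fin n → ℝ)) (x g : Fin n → ℝ) :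
    wedge v u x *ᵥ g = (u x ⬝ᵥ g) • v x - (v x ⬝ᵥ g) • u x := by
  ext i
  simp only [wedge, mulVec, dotProduct, of_apply, Pi.sub_apply, Pi.smul_apply, smul_eq_mul,
    Finset.sum_mul, ← Finset.sum_sub_distrib]
  exact Finset.sum_congr rfl fun j _ => by ring

theorem sum_smul_fderiv_single {M : Type*} [NormedAddCommGroup M] [NormedSpace ℝ M]
    (F : (Fin n → ℝ) → M) (x a : Fin n → ℝ) :
    ∑ l, a l • fderiv ℝ F x (Pi.single l 1) = fderiv ℝ F x a := by
  conv_rhs => rw [pi_eq_sum_univ' a, map_sum]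
  simp only [map_smul]

theorem dotProduct_grad (F : (Fin n → ℝ) → ℝ) (x a : Fin n → ℝ) :
    a ⬝ᵥ grad F x = fderiv ℝ F x a :=
  sum_smul_fderiv_single F x a

theorem partialDeriv_wedge_const {w : (Fin n → ℝ) → (Fin n → ℝ)} {p : Fin n → ℝ}
    (hw : DifferentiableAt ℝ w p) (e : Fin n → ℝ) (i j l : Fin n) :
    partialDeriv (fun q => wedge w (fun _ => e) q i j) l p =
      fderiv ℝ w p (Pi.single l 1) i * e j - fderiv ℝ w p (Pi.single l 1) j * e i := by
  let A : (Fin n → ℝ) →L[ℝ] ℝ :=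
    e j • ContinuousLinearMap.proj i - e i • ContinuousLinearMap.proj j
  have hJ : (fun q => wedge w (fun _ => e) q i j) = A ∘ w := by
    funext q
    simp only [wedge, of_apply, FunLike.coe_sub, FunLike.coe_smul, Function.comp_apply,
      Pi.sub_apply, Pi.smul_apply, ContinuousLinearMap.proj_apply, smul_eq_mul, A]
    ring
  rw [partialDeriv, hJ, (A.hasFDerivAt.comp p hw.hasFDerivAt).fderiv]
  simp only [ContinuousLinearMap.sub_comp, ContinuousLinearMap.smul_comp, _root_.sub_apply,
    _root_.smul_apply, ContinuousLinearMap.comp_apply, ContinuousLinearMap.proj_apply, smul_eq_mul, A]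
  ring

theorem jacobiIdentity_wedge_const {w : (Fin n → ℝ) → (Fin n → ℝ)} {e : Fin n → ℝ}
    (hw : Differentiable ℝ w) (he : ∀ p, fderiv ℝ w p e = 0) :
    JacobiIdentity (wedge w fun _ => e) := by
  intro i j k p
  set D := fun l m => fderiv ℝ w p (Pi.single l 1) m
  have hDe : ∀ m, ∑ l, e l * D l m = 0 := fun m => by
    simpa [D] using congrFun ((sum_smul_fderiv_single w p e).trans (he p)) m
  simp only [partialDeriv_wedge_const (hw p)]
  calc _ = ∑ l, ((w p j * e k - w p k * e j) * (e l * D l i)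
          + (w p k * e i - w p i * e k) * (e l * D l j)
          + (w p i * e j - w p j * e i) * (e l * D l k)) :=
        Finset.sum_congr rfl fun l _ => by simp only [wedge, of_apply, D]; ring
    _ = 0 := by
        simp only [Finset.sum_add_distrib, ← Finset.mul_sum, hDe, mul_zero, add_zero]

end wedge

section extension

variable {n : ℕ} {F : Type*} [NormedAddCommGroup F] [NormedSpace ℝ F]

def initCLM (n : ℕ) : (Fin (n + 1) → ℝ) →L[ℝ] (Fin n → ℝ) :=
  ContinuousLinearMap.pi fun i => ContinuousLinearMap.proj i.castSucc

theorem fderiv_comp_init {f : (Fin n → ℝ) → F} {p : Fin (n + 1) → ℝ}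
    (hf : DifferentiableAt ℝ f (Fin.init p)) (a : Fin (n + 1) → ℝ) :
    fderiv ℝ (fun q => f (Fin.init q)) p a = fderiv ℝ f (Fin.init p) (Fin.init a) :=
  DFunLike.congr_fun (hf.hasFDerivAt.comp p (initCLM n).hasFDerivAt).fderiv a

theorem init_single_last {α : Type*} [Zero α] (x : α) :
    Fin.init (Pi.single (Fin.last n) x : Fin (n + 1) → α) = 0 := by
  change Fin.init (Function.update (0 : Fin (n + 1) → α) _ x) = 0
  rw [Fin.init_update_last]
  rfl

theorem extendField_last (v : (Fin n → ℝ) → (Fin n → ℝ)) (p : Fin (n + 1) → ℝ) :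
    extendField v p (Fin.last n) = 0 :=
  Fin.snoc_last _ _

theorem init_extendField (v : (Fin n → ℝ) → (Fin n → ℝ)) (p : Fin (n + 1) → ℝ) :
    Fin.init (extendField v p) = v (Fin.init p) :=
  Fin.init_snoc _ _

theorem differentiable_snoc_zero {v : (Fin n → ℝ) → (Fin n → ℝ)} (hv : Differentiable ℝ v) :
    Differentiable ℝ fun x => (Fin.snoc (v x) 0 : Fin (n + 1) → ℝ) := by
  refine differentiable_pi.2 (Fin.lastCases ?_ fun i => ?_)
  · simp only [Fin.snoc_last]
    exact differentiable_const 0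
  · simpa only [Fin.snoc_castSucc] using differentiable_pi.1 hv i

theorem differentiable_extendField {v : (Fin n → ℝ) → (Fin n → ℝ)} (hv : Differentiable ℝ v) :
    Differentiable ℝ (extendField v) :=
  (differentiable_snoc_zero hv).comp (initCLM n).differentiable

theorem fderiv_extendField_single_last {v : (Fin n → ℝ) → (Fin n → ℝ)}
    (hv : Differentiable ℝ v) (p : Fin (n + 1) → ℝ) :
    fderiv ℝ (extendField v) p (Pi.single (Fin.last n) 1) = 0 := by
  change fderiv ℝ (fun q => (Fin.snoc (v (Fin.init q)) 0 : Fin (n + 1) → ℝ)) p _ = 0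
  rw [fderiv_comp_init (differentiable_snoc_zero hv _), init_single_last, map_zero]

end extension

/-- **Hamiltonization in an extended phase space.** Let `v` be a `C¹` vector field
on ℝⁿ and `E` a `C¹` first integral of `v`. On ℝⁿ × ℝ (coordinate `y` added last), with
`ṽ(x,y) = (v(x),0)`, `e = ∂/∂y` and `J = ṽ ∧ e`: (i) `J` satisfies the Jacobi identity;
(ii) the Hamiltonian vector field of the coordinate function `y` with respect to `J` is `ṽ`;
(iii) `E`, regarded as a function on ℝⁿ × ℝ independent of `y`, is a Casimir of `J`. -/
theorem extended_phase_space_hamiltonization {n : ℕ}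
    (v : (Fin n → ℝ) → (Fin n → ℝ)) (E : (Fin n → ℝ) → ℝ)
    (hv : ContDiff ℝ 1 v) (hE : ContDiff ℝ 1 E)
    (hint : ∀ x, fderiv ℝ E x (v x) = 0) :
    JacobiIdentity (wedge (extendField v) (fun _ => Pi.single (Fin.last n) 1)) ∧
    (∀ p : Fin (n + 1) → ℝ,
      (wedge (extendField v) (fun _ => Pi.single (Fin.last n) 1) p).mulVec
        (grad (fun q => q (Fin.last n)) p) = extendField v p) ∧
    (∀ p : Fin (n + 1) → ℝ,
      (wedge (extendField v) (fun _ => Pi.single (Fin.last n) 1) p).mulVec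
        (grad (fun q => E fun i => q i.castSucc) p) = 0) := by
  have hvd : Differentiable ℝ v := hv.differentiable one_ne_zero
  have hEd : Differentiable ℝ E := hE.differentiable one_ne_zero
  refine ⟨jacobiIdentity_wedge_const (differentiable_extendField hvd)
    (fderiv_extendField_single_last hvd), fun p => ?_, fun p => ?_⟩
  · rw [wedge_mulVec, dotProduct_grad, dotProduct_grad, (hasFDerivAt_apply _ p).fderiv]
    simp only [ContinuousLinearMap.proj_apply, Pi.single_eq_same, one_smul, extendField_last,
      zero_smul, sub_zero]
  · change _ *ᵥ grad (fun q => E (Fin.init q)) p = 0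
    rw [wedge_mulVec, dotProduct_grad, dotProduct_grad, fderiv_comp_init (hEd _),
      fderiv_comp_init (hEd _), init_single_last, init_extendField, map_zero, hint]
    simp only [zero_smul, sub_self]
end

section
/- (Flat inner body.) For the nonholonomic hinge system v on ℝ⁵ with the additional assumption I₃ = I₁ + I₂, the three functions C₁ = ω₁² + ω₂², C₂ = Ω₁² + (ω₂ − Ω₂)², C₃ = Ω₂² + (ω₁ − Ω₁)² are first integrals: ⟨v, ∇C_k⟩ = 0 on ℝ⁵ for k = 1, 2, 3. -/
/-- The nonholonomic hinge system on ℝ⁵, coordinates `x = (Ω₁, Ω₂, ω₁, ω₂, ω₃)`,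
with parameters `I₁, I₂, I₃` (tensor of inertia of the inner body) and `Is` (shell):
`Ω̇₁ = ω₃(Ω₂−ω₂)`, `Ω̇₂ = ω₃(ω₁−Ω₁)`, `I₁ω̇₁ = (I₂−I₃)ω₂ω₃`, `I₂ω̇₂ = (I₃−I₁)ω₁ω₃`,
`(Is+I₃)ω̇₃ = Is(Ω₁ω₂−Ω₂ω₁) + (I₁−I₂)ω₁ω₂`. -/
noncomputable def hinge (I₁ I₂ I₃ Is : ℝ) (x : Fin 5 → ℝ) : Fin 5 → ℝ :=
  ![x 4 * (x 1 - x 3),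
    x 4 * (x 2 - x 0),
    (I₂ - I₃) * (x 3 * x 4) / I₁,
    (I₃ - I₁) * (x 2 * x 4) / I₂,
    (Is * (x 0 * x 3 - x 1 * x 2) + (I₁ - I₂) * (x 2 * x 3)) / (Is + I₃)]

/-- The energy of the nonholonomic hinge:
`E = ½ Is (Ω₁² + Ω₂²) + ½ (I₁ω₁² + I₂ω₂² + (I₃+Is)ω₃²)`. -/
noncomputable def hingeE (I₁ I₂ I₃ Is : ℝ) (x : Fin 5 → ℝ) : ℝ :=
  (1 / 2) * Is * ((x 0) ^ 2 + (x 1) ^ 2)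
    + (1 / 2) * (I₁ * (x 2) ^ 2 + I₂ * (x 3) ^ 2 + (I₃ + Is) * (x 4) ^ 2)

/-!
When `I₃ = I₁ + I₂` the equations for `ω₁, ω₂` reduce to `ω̇₁ = -ω₂ω₃`, `ω̇₂ = ω₁ω₃`. Then each of the
planar vectors `(ω₁, ω₂)`, `(Ω₁, ω₂ - Ω₂)` and `(Ω₂, ω₁ - Ω₁)` rotates with angular velocity `±ω₃`,
so its squared length is conserved.
-/

theorem fderiv_sq_add_sq_apply {E : Type*} [NormedAddCommGroup E] [NormedSpace ℝ E]
    {f g : E → ℝ} {f' g' : E →L[ℝ] ℝ} {x : E} (hf : HasFDerivAt f f' x) (hg : HasFDerivAt g g' x)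
    (v : E) :
    fderiv ℝ (fun y => f y ^ 2 + g y ^ 2) x v = 2 * (f x * f' v + g x * g' v) := by
  rw [((hf.pow 2).fun_add (hg.pow 2)).fderiv]
  simp only [add_apply, smul_apply, smul_eq_mul]
  ring

section Components

variable {I₁ I₂ Is : ℝ} (x : Fin 5 → ℝ)

theorem hinge_apply_zero (I₃ : ℝ) : hinge I₁ I₂ I₃ Is x 0 = x 4 * (x 1 - x 3) := rfl

theorem hinge_apply_one (I₃ : ℝ) : hinge I₁ I₂ I₃ Is x 1 = x 4 * (x 2 - x 0) := rfl

theorem hinge_apply_two_of_flat (hI₁ : I₁ ≠ 0) : hinge I₁ I₂ (I₁ + I₂) Is x 2 = -(x 3 * x 4) := by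
  simp only [hinge, Matrix.cons_val]
  field_simp
  ring

theorem hinge_apply_three_of_flat (hI₂ : I₂ ≠ 0) : hinge I₁ I₂ (I₁ + I₂) Is x 3 = x 2 * x 4 := by
  simp only [hinge, Matrix.cons_val]
  field_simp
  ring

end Components

theorem hinge_flat_body_casimirs_general
    (I₁ I₂ I₃ Is : ℝ) (hI₁ : 0 < I₁) (hI₂ : 0 < I₂)
    (hflat : I₃ = I₁ + I₂) :
    (∀ x : Fin 5 → ℝ,
      fderiv ℝ (fun y : Fin 5 → ℝ => (y 2) ^ 2 + (y 3) ^ 2) x (hinge I₁ I₂ I₃ Is x) = 0) ∧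
    (∀ x : Fin 5 → ℝ,
      fderiv ℝ (fun y : Fin 5 → ℝ => (y 0) ^ 2 + (y 3 - y 1) ^ 2) x (hinge I₁ I₂ I₃ Is x) = 0) ∧
    (∀ x : Fin 5 → ℝ,
      fderiv ℝ (fun y : Fin 5 → ℝ => (y 1) ^ 2 + (y 2 - y 0) ^ 2) x (hinge I₁ I₂ I₃ Is x) = 0) := by
  subst hflat
  refine ⟨fun x => ?_, fun x => ?_, fun x => ?_⟩
  · rw [fderiv_sq_add_sq_apply (hasFDerivAt_apply 2 x) (hasFDerivAt_apply 3 x)]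
    simp only [ContinuousLinearMap.proj_apply, hinge_apply_two_of_flat x hI₁.ne',
      hinge_apply_three_of_flat x hI₂.ne']
    ring
  · rw [fderiv_sq_add_sq_apply (hasFDerivAt_apply 0 x)
      ((hasFDerivAt_apply 3 x).fun_sub (hasFDerivAt_apply 1 x))]
    simp only [sub_apply, ContinuousLinearMap.proj_apply, hinge_apply_zero,
      hinge_apply_one, hinge_apply_three_of_flat x hI₂.ne']
    ring
  · rw [fderiv_sq_add_sq_apply (hasFDerivAt_apply 1 x)
      ((hasFDerivAt_apply 2 x).fun_sub (hasFDerivAt_apply 0 x))]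
    simp only [sub_apply, ContinuousLinearMap.proj_apply, hinge_apply_zero,
      hinge_apply_one, hinge_apply_two_of_flat x hI₁.ne']
    ring

/-- **flat inner body.** If `I₃ = I₁ + I₂`, the three functions
`C₁ = ω₁² + ω₂²`, `C₂ = Ω₁² + (ω₂−Ω₂)²`, `C₃ = Ω₂² + (ω₁−Ω₁)²` are first integrals
of the nonholonomic hinge system. -/
theorem hinge_flat_body_casimirs
    (I₁ I₂ I₃ Is : ℝ) (hI₁ : 0 < I₁) (hI₂ : 0 < I₂) (hI₃ : 0 < I₃) (hIs : 0 < Is)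
    (hflat : I₃ = I₁ + I₂) :
    (∀ x : Fin 5 → ℝ,
      fderiv ℝ (fun y : Fin 5 → ℝ => (y 2) ^ 2 + (y 3) ^ 2) x (hinge I₁ I₂ I₃ Is x) = 0) ∧
    (∀ x : Fin 5 → ℝ,
      fderiv ℝ (fun y : Fin 5 → ℝ => (y 0) ^ 2 + (y 3 - y 1) ^ 2) x (hinge I₁ I₂ I₃ Is x) = 0) ∧
    (∀ x : Fin 5 → ℝ,
      fderiv ℝ (fun y : Fin 5 → ℝ => (y 1) ^ 2 + (y 2 - y 0) ^ 2) x (hinge I₁ I₂ I₃ Is x) = 0) :=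
  hinge_flat_body_casimirs_general I₁ I₂ I₃ Is hI₁ hI₂ hflat
end

section
/- (General case Casimir functions.) For the nonholonomic hinge system v on ℝ⁵ (arbitrary positive I₁, I₂, I₃, I_s), the two functions C₁ = I₁(I₁−I₃)ω₁² + I₂(I₂−I₃)ω₂² and C₂ = (I₁ω₁ − I₃Ω₁)² + (I₂ω₂ − I₃Ω₂)² are first integrals: ⟨v, ∇C₁⟩ = 0 and ⟨v, ∇C₂⟩ = 0 on ℝ⁵. -/
section
variable {E : Type*} [NormedAddCommGroup E] [NormedSpace ℝ E] {f g : E → ℝ} {x w : E}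

theorem fderiv_weighted_sq_add_sq_apply (a b : ℝ) (hf : DifferentiableAt ℝ f x)
    (hg : DifferentiableAt ℝ g x) :
    fderiv ℝ (fun y => a * f y ^ 2 + b * g y ^ 2) x w
      = 2 * (a * f x * fderiv ℝ f x w + b * g x * fderiv ℝ g x w) := by
  rw [fderiv_fun_add ((hf.fun_pow 2).const_mul a) ((hg.fun_pow 2).const_mul b),
    fderiv_const_mul (hf.fun_pow 2), fderiv_const_mul (hg.fun_pow 2), fderiv_fun_pow 2 hf,
    fderiv_fun_pow 2 hg]
  simp only [add_apply, smul_apply, smul_eq_mul]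
  ring

theorem fderiv_sq_add_sq_apply_eq_zero_of_rotation (c : ℝ) (hf : DifferentiableAt ℝ f x)
    (hg : DifferentiableAt ℝ g x) (hfw : fderiv ℝ f x w = c * g x)
    (hgw : fderiv ℝ g x w = -(c * f x)) :
    fderiv ℝ (fun y => f y ^ 2 + g y ^ 2) x w = 0 := by
  have h := fderiv_weighted_sq_add_sq_apply (w := w) 1 1 hf hg
  simp only [one_mul] at h
  rw [h, hfw, hgw]
  ring

end

section
variable {n : ℕ} (a b : ℝ) (i j : Fin n) (x : Fin n → ℝ)

theorem differentiableAt_mul_apply_sub_mul_apply :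
    DifferentiableAt ℝ (fun y : Fin n → ℝ => a * y i - b * y j) x :=
  ((differentiableAt_apply i x).const_mul a).sub ((differentiableAt_apply j x).const_mul b)

theorem fderiv_mul_apply_sub_mul_apply (w : Fin n → ℝ) :
    fderiv ℝ (fun y : Fin n → ℝ => a * y i - b * y j) x w = a * w i - b * w j := by
  rw [fderiv_fun_sub ((differentiableAt_apply i x).const_mul a)
      ((differentiableAt_apply j x).const_mul b),
    fderiv_const_mul (differentiableAt_apply i x), fderiv_const_mul (differentiableAt_apply j x)]
  simp only [sub_apply, smul_apply, smul_eq_mul,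
    (hasFDerivAt_apply _ x).fderiv, ContinuousLinearMap.proj_apply]

end

def hingeC₁ (I₁ I₂ I₃ : ℝ) (y : Fin 5 → ℝ) : ℝ :=
  I₁ * (I₁ - I₃) * y 2 ^ 2 + I₂ * (I₂ - I₃) * y 3 ^ 2

def hingeC₂ (I₁ I₂ I₃ : ℝ) (y : Fin 5 → ℝ) : ℝ :=
  (I₁ * y 2 - I₃ * y 0) ^ 2 + (I₂ * y 3 - I₃ * y 1) ^ 2

section
variable {I₁ I₂ I₃ : ℝ} (Is : ℝ)

theorem fderiv_hingeC₁_hinge (hI₁ : I₁ ≠ 0) (hI₂ : I₂ ≠ 0) (x : Fin 5 → ℝ) :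
    fderiv ℝ (hingeC₁ I₁ I₂ I₃) x (hinge I₁ I₂ I₃ Is x) = 0 := by
  unfold hingeC₁
  rw [fderiv_weighted_sq_add_sq_apply _ _ (differentiableAt_apply 2 x)
    (differentiableAt_apply 3 x)]
  simp only [(hasFDerivAt_apply _ x).fderiv, ContinuousLinearMap.proj_apply, hinge,
    Matrix.cons_val]
  field_simp
  ring

theorem fderiv_hingeC₂_hinge (hI₁ : I₁ ≠ 0) (hI₂ : I₂ ≠ 0) (x : Fin 5 → ℝ) :
    fderiv ℝ (hingeC₂ I₁ I₂ I₃) x (hinge I₁ I₂ I₃ Is x) = 0 := by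
  refine fderiv_sq_add_sq_apply_eq_zero_of_rotation (x 4)
    (differentiableAt_mul_apply_sub_mul_apply _ _ _ _ x)
    (differentiableAt_mul_apply_sub_mul_apply _ _ _ _ x) ?_ ?_ <;>
  · rw [fderiv_mul_apply_sub_mul_apply]
    simp only [hinge, Matrix.cons_val, Matrix.cons_val_zero, Matrix.cons_val_one]
    field_simp
    ring

end

theorem hinge_general_casimirs_general
    (I₁ I₂ I₃ Is : ℝ) (hI₁ : 0 < I₁) (hI₂ : 0 < I₂) :
    (∀ x : Fin 5 → ℝ,
      fderiv ℝ (fun y : Fin 5 → ℝ => I₁ * (I₁ - I₃) * (y 2) ^ 2 + I₂ * (I₂ - I₃) * (y 3) ^ 2)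
        x (hinge I₁ I₂ I₃ Is x) = 0) ∧
    (∀ x : Fin 5 → ℝ,
      fderiv ℝ (fun y : Fin 5 → ℝ => (I₁ * y 2 - I₃ * y 0) ^ 2 + (I₂ * y 3 - I₃ * y 1) ^ 2)
        x (hinge I₁ I₂ I₃ Is x) = 0) :=
  ⟨fderiv_hingeC₁_hinge Is hI₁.ne' hI₂.ne', fderiv_hingeC₂_hinge Is hI₁.ne' hI₂.ne'⟩

/-- **general case Casimir functions.** For arbitrary positive `I₁, I₂, I₃, Is`,
the two functions `C₁ = I₁(I₁−I₃)ω₁² + I₂(I₂−I₃)ω₂²` and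
`C₂ = (I₁ω₁−I₃Ω₁)² + (I₂ω₂−I₃Ω₂)²` are first integrals of the nonholonomic hinge system. -/
theorem hinge_general_casimirs
    (I₁ I₂ I₃ Is : ℝ) (hI₁ : 0 < I₁) (hI₂ : 0 < I₂) (hI₃ : 0 < I₃) (hIs : 0 < Is) :
    (∀ x : Fin 5 → ℝ,
      fderiv ℝ (fun y : Fin 5 → ℝ => I₁ * (I₁ - I₃) * (y 2) ^ 2 + I₂ * (I₂ - I₃) * (y 3) ^ 2)
        x (hinge I₁ I₂ I₃ Is x) = 0) ∧
    (∀ x : Fin 5 → ℝ,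
      fderiv ℝ (fun y : Fin 5 → ℝ => (I₁ * y 2 - I₃ * y 0) ^ 2 + (I₂ * y 3 - I₃ * y 1) ^ 2)
        x (hinge I₁ I₂ I₃ Is x) = 0) :=
  hinge_general_casimirs_general I₁ I₂ I₃ Is hI₁ hI₂
end
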